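/- (No new deadlocks.) Let SP ⊆ S × A × A be a set of stateful priorities and T' the transformed relation: T' s a s' holds iff T s a s' holds and ¬∃ b, (s, a, b) ∈ SP. Assume: (i) SP contains no reflexive priority, i.e., (p, a, b) ∈ SP implies a ≠ b; (ii) SP contains no circular priorities, i.e., there are no (p, a, b) ∈ SP and (p, b, c) ∈ SP (a blocker at p is never itself blocked at p); and (iii) every priority has an enabled blocker, i.e., (p, a, b) ∈ SP implies there exists q with T p b q. Then the transformation introduces no new deadlocks: every state that is reachable under T' and has no T'-successor also has no T-successor. -/
import Mathlib


/-- A computation path of the LTS `(S, A, T, I)`: a nonempty finite sequence of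
states starting at some state in `I`, with each consecutive pair related by `T`
under some action. -/
def IsCompPath {S A : Type*} (I : Set S) (T : S → A → S → Prop) (l : List S) : Prop :=
  (∃ s ∈ I, l.head? = some s) ∧ l.Chain' (fun x y => ∃ a, T x a y)

/-- A state is reachable if some computation path ends at it. -/
def Reachable {S A : Type*} (I : Set S) (T : S → A → S → Prop) (q : S) : Prop :=
  ∃ l : List S, IsCompPath I T l ∧ l.getLast? = some q

/-- No new deadlocks: if the stateful priorities `SP` are non-reflexive,
non-circular, and every priority has an enabled blocker, then every state
reachable under the transformed relation `T'` having no `T'`-successor already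
has no `T`-successor. -/
theorem no_new_deadlocks {S A : Type*} (I : Set S) (T : S → A → S → Prop)
    (SP : Set (S × A × A)) (T' : S → A → S → Prop)
    (hT' : ∀ s a s', T' s a s' ↔ (T s a s' ∧ ¬ ∃ b, (s, a, b) ∈ SP))
    (hrefl : ∀ p a b, (p, a, b) ∈ SP → a ≠ b)
    (hcirc : ¬ ∃ p a b c, (p, a, b) ∈ SP ∧ (p, b, c) ∈ SP)
    (henabled : ∀ p a b, (p, a, b) ∈ SP → ∃ q, T p b q) :
    ∀ s, Reachable I T' s → (¬ ∃ a q, T' s a q) → ¬ ∃ a q, T s a q := by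
  intro s _ hnd ⟨a, q, hT⟩
  by_cases hb : ∃ b, (s, a, b) ∈ SP
  · obtain ⟨b, hb⟩ := hb
    obtain ⟨q', hq'⟩ := henabled s a b hb
    exact hnd ⟨b, q', (hT' s b q').mpr ⟨hq', fun ⟨c, hc⟩ => hcirc ⟨s, a, b, c, hb, hc⟩⟩⟩
  · exact hnd ⟨a, q, (hT' s a q).mpr ⟨hT, hb⟩⟩
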